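/- arXiv:0907.0403 — 2 statements merged into one kernel-verified Lean document; each statement's English description precedes it below -/
import Mathlib

section
/- Characterization of common knowledge of a fact in the forwarding setting: For G ⊆ N with |G| ≥ 2, atom p ∈ At, and H-compliant forwarding state (V,M), we have (V,M) ⊨_H C_G p iff there is a message (·,A,p) ∈ M with G ⊆ A. -/
structure Msg (P A : Type) where
  sender : P
  grp : Set P
  fact : A

inductive Form (P A : Type) where
  | atom : A → Form P A
  | neg  : Form P A → Form P A
  | and  : Form P A → Form P A → Form P A
  | or   : Form P A → Form P A → Form P A
  | ck   : Set P → Form P A → Form P A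

/-- The negation-free (positive) fragment L⁺. -/
def Positive {P A : Type} : Form P A → Prop
  | .atom _ => True
  | .neg _ => False
  | .and φ ψ => Positive φ ∧ Positive ψ
  | .or φ ψ => Positive φ ∧ Positive ψ
  | .ck _ φ => Positive φ

/-- Atoms occurring in a formula. -/
def FactsF {P A : Type} : Form P A → Set A
  | .atom p => {p}
  | .neg φ => FactsF φ
  | .and φ ψ => FactsF φ ∪ FactsF ψ
  | .or φ ψ => FactsF φ ∪ FactsF ψ
  | .ck _ φ => FactsF φ

/-- Facts occurring in a set of messages. -/
def Facts {P A : Type} (M : Set (Msg P A)) : Set A := {p | ∃ m ∈ M, m.fact = p}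

/-- All messages are H-compliant. -/
def HComp {P A : Type} (H : Set (Set P)) (M : Set (Msg P A)) : Prop :=
  ∀ m ∈ M, m.grp ∈ H

/-- (j,B,p) ⤳ (i,A,p): p ∉ At_i and i ∈ B. -/
def leadsto {P A : Type} (owner : A → P) (m m' : Msg P A) : Prop :=
  m'.fact = m.fact ∧ owner m'.fact ≠ m'.sender ∧ m'.sender ∈ m.grp

/-- An explanation of a message m in (V,M): a non-circular ⤳-chain of
    p-messages in M starting at a player who initially knows p = m.fact
    and ending at m. -/
def Explains {P A : Type} (owner : A → P) (V : Set A) (M : Set (Msg P A))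
    (m : Msg P A) : Prop :=
  ∃ L : List (Msg P A),
    (∀ x ∈ L, x ∈ M) ∧
    List.Chain' (leadsto owner) L ∧
    (L.map Msg.sender).Nodup ∧
    (∀ x ∈ L, x.fact = m.fact) ∧
    (∃ m₀, L.head? = some m₀ ∧ owner m₀.fact = m₀.sender ∧ m₀.fact ∈ V) ∧
    L.getLast? = some m

/-- A forwarding state: every message has a sender in its group and an explanation. -/
def FwState {P A : Type} (owner : A → P) (V : Set A) (M : Set (Msg P A)) : Prop :=
  ∀ m ∈ M, m.sender ∈ m.grp ∧ Explains owner V M m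

/-- Indistinguishability for player i: equality of (V_i, M_i). -/
def indist {P A : Type} (owner : A → P) (i : P)
    (s t : Set A × Set (Msg P A)) : Prop :=
  {p ∈ s.1 | owner p = i} = {p ∈ t.1 | owner p = i} ∧
  {m ∈ s.2 | i ∈ m.grp} = {m ∈ t.2 | i ∈ m.grp}

/-- ∼_G: transitive closure of the union of the ∼_i, i ∈ G. -/
def reach {P A : Type} (owner : A → P) (G : Set P) :
    Set A × Set (Msg P A) → Set A × Set (Msg P A) → Prop :=
  Relation.TransGen (fun s t => ∃ i ∈ G, indist owner i s t)

/-- Semantics ⊨_H (forwarding setting): C_G quantifies over H-compliant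
    forwarding states. -/
def sat {P A : Type} (owner : A → P) (H : Set (Set P)) :
    Form P A → Set A → Set (Msg P A) → Prop
  | .atom p, V, _ => p ∈ V
  | .neg φ, V, M => ¬ sat owner H φ V M
  | .and φ ψ, V, M => sat owner H φ V M ∧ sat owner H ψ V M
  | .or φ ψ, V, M => sat owner H φ V M ∨ sat owner H ψ V M
  | .ck G φ, V, M => ∀ V' M', FwState owner V' M' → HComp H M' →
      reach owner G (V, M) (V', M') → sat owner H φ V' M'

/-- The complete hypergraph: all nonempty subsets of players. -/
def completeH (P : Type) : Set (Set P) := {B | B.Nonempty}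

/- Messages addressed to all of `G` survive every `∼_G`-step, and in a forwarding state the fact
of every message is true, since its explanation starts with a player who knows it. Conversely, if
no `p`-message reaches all of `G`, a player of `G` other than the owner of `p` cannot tell whether
`p` holds, and for each `k ∈ G` player `k` cannot see the `p`-messages missing `k`; chaining these
finitely many steps reaches the forwarding state in which `p` is false and no `p`-message was sent. -/

lemma indist_of_subset {P A : Type} {owner : A → P} {i : P} {s t : Set A × Set (Msg P A)}
    (h₁ : t.1 ⊆ s.1) (h₁' : ∀ q ∈ s.1, q ∉ t.1 → owner q ≠ i)
    (h₂ : t.2 ⊆ s.2) (h₂' : ∀ m ∈ s.2, m ∉ t.2 → i ∉ m.grp) :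
    indist owner i s t := by
  constructor
  · ext q
    exact ⟨fun ⟨hq, ho⟩ => ⟨by_contra fun h => h₁' q hq h ho, ho⟩, fun ⟨hq, ho⟩ => ⟨h₁ hq, ho⟩⟩
  · ext m
    exact ⟨fun ⟨hm, hi⟩ => ⟨by_contra fun h => h₂' m hm h hi, hi⟩, fun ⟨hm, hi⟩ => ⟨h₂ hm, hi⟩⟩

lemma mem_snd_of_reach {P A : Type} {owner : A → P} {G : Set P} {s t : Set A × Set (Msg P A)}
    (h : reach owner G s t) {m : Msg P A} (hm : m ∈ s.2) (hG : G ⊆ m.grp) : m ∈ t.2 := by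
  induction h with
  | single hst => obtain ⟨i, hi, -, h⟩ := hst; exact (h ▸ ⟨hm, hG hi⟩ : m ∈ {x ∈ _ | i ∈ x.grp}).1
  | tail _ hst ih => obtain ⟨i, hi, -, h⟩ := hst; exact (h ▸ ⟨ih, hG hi⟩ : m ∈ {x ∈ _ | i ∈ x.grp}).1

namespace FwState

variable {P A : Type} {owner : A → P} {V : Set A} {M : Set (Msg P A)}

lemma fact_mem (hS : FwState owner V M) {m : Msg P A} (hm : m ∈ M) : m.fact ∈ V := by
  obtain ⟨-, L, -, -, -, hfacts, ⟨m₀, hhead, -, hm₀⟩, -⟩ := hS m hm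
  rwa [← hfacts m₀ (List.mem_of_mem_head? hhead)]

lemma diff_fact (hS : FwState owner V M) (p : A) :
    FwState owner (V \ {p}) {m ∈ M | m.fact ≠ p} := by
  rintro m ⟨hm, hmp⟩
  obtain ⟨hsender, L, hLM, hchain, hnodup, hfacts, ⟨m₀, hhead, howner, hm₀⟩, hlast⟩ := hS m hm
  have hm₀p : m₀.fact ≠ p := hfacts m₀ (List.mem_of_mem_head? hhead) ▸ hmp
  exact ⟨hsender, L, fun x hx => ⟨hLM x hx, hfacts x hx ▸ hmp⟩, hchain, hnodup, hfacts,
    ⟨m₀, hhead, howner, hm₀, hm₀p⟩, hlast⟩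

end FwState

lemma reach_diff_fact {P A : Type} (owner : A → P) {G : Set P} (V : Set A) (M : Set (Msg P A))
    {p : A} {i : P} (hi : i ∈ G) (hpi : owner p ≠ i) {S : Set P} (hS : S.Finite) (hSG : S ⊆ G) :
    reach owner G (V, M) (V \ {p}, {m ∈ M | m.fact = p → insert i S ⊆ m.grp}) := by
  induction S, hS using Set.Finite.induction_on with
  | empty =>
    refine .single ⟨i, hi, indist_of_subset Set.sdiff_subset ?_ (Set.sep_subset _ _) ?_⟩
    · rintro q hq hq' rfl
      exact hq' ⟨hq, fun hqp => hpi (hqp ▸ rfl)⟩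
    · rintro m hm hm' him
      exact hm' ⟨hm, fun _ => by simpa using him⟩
  | @insert k S _ _ ih =>
    refine .tail (ih ((Set.subset_insert k S).trans hSG))
      ⟨k, hSG (Set.mem_insert k S), indist_of_subset subset_rfl (fun _ h h' => (h' h).elim) ?_ ?_⟩
    · exact fun m ⟨hm, hmG⟩ => ⟨hm, fun hmp =>
        (Set.insert_subset_insert (Set.subset_insert k S)).trans (hmG hmp)⟩
    · rintro m ⟨hm, hmG⟩ hm' hkm
      refine hm' ⟨hm, fun hmp => ?_⟩
      rw [Set.insert_comm]
      exact Set.insert_subset hkm (hmG hmp)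

theorem fw_ck_fact_iff_msg {P A : Type} [Fintype P] (owner : A → P)
    (H : Set (Set P)) (V : Set A) (M : Set (Msg P A))
    (hS : FwState owner V M) (hC : HComp H M)
    (G : Set P) (hG : ∃ i ∈ G, ∃ j ∈ G, i ≠ j) (p : A) :
    sat owner H (.ck G (.atom p)) V M ↔ ∃ m ∈ M, G ⊆ m.grp ∧ m.fact = p := by
  refine ⟨fun hck => ?_, fun ⟨m, hm, hGm, hmp⟩ V' M' hS' _ hreach => ?_⟩
  · by_contra! hno
    obtain ⟨i, hiG, hpi⟩ : ∃ i ∈ G, owner p ≠ i := by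
      obtain ⟨i, hi, j, hj, hij⟩ := hG
      by_cases hpi : owner p = i
      exacts [⟨j, hj, hpi ▸ hij⟩, ⟨i, hi, hpi⟩]
    have hstrip : {m ∈ M | m.fact = p → insert i G ⊆ m.grp} = {m ∈ M | m.fact ≠ p} := by
      rw [Set.insert_eq_of_mem hiG]
      exact Set.ext fun m => and_congr_right fun hm =>
        ⟨fun h hmp => hno m hm (h hmp) hmp, fun h hmp => (h hmp).elim⟩
    have hreach := reach_diff_fact owner V M hiG hpi (Set.toFinite G) subset_rfl
    rw [hstrip] at hreach
    exact (hck _ _ (hS.diff_fact p) (fun m hm => hC m hm.1) hreach).2 rfl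
  · exact hmp ▸ hS'.fact_mem (mem_snd_of_reach hreach hm hGm)
end

section
/- Individual knowledge of a fact in the forwarding setting: For any player i, atom p ∈ At, and H-compliant forwarding state (V,M), (V,M) ⊨_H K_i p iff p ∈ V_i ∪ Facts(M_i), i.e., player i knows p iff he either initially knows it (p ∈ V ∩ At_i) or has received a message containing it. -/
/-!
Every fact player `i` sees, in `V_i` or in a message of `M_i`, is true in every forwarding state
`i` cannot tell apart from `(V, M)`, since messages there carry true facts. Conversely, keeping only
the facts `i` sees and the messages about them yields an `H`-compliant forwarding state which `i`
cannot tell apart from `(V, M)` and in which nothing else is true.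
-/

variable {P A : Type} {owner : A → P}

/-- `V_i ∪ Facts(M_i)` in the paper's notation. -/
def knownFacts (owner : A → P) (i : P) (V : Set A) (M : Set (Msg P A)) : Set A :=
  {q ∈ V | owner q = i} ∪ Facts {m ∈ M | i ∈ m.grp}

theorem mem_knownFacts {i : P} {V : Set A} {M : Set (Msg P A)} {p : A} :
    p ∈ knownFacts owner i V M ↔
      (p ∈ V ∧ owner p = i) ∨ ∃ m ∈ M, i ∈ m.grp ∧ m.fact = p := by
  simp [knownFacts, Facts, and_assoc]

theorem FwState.fact_mem_s13 {V : Set A} {M : Set (Msg P A)} (hS : FwState owner V M)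
    {m : Msg P A} (hm : m ∈ M) : m.fact ∈ V := by
  obtain ⟨L, -, -, -, hfacts, ⟨m₀, hhead, -, hV⟩, -⟩ := (hS m hm).2
  rwa [← hfacts m₀ (List.mem_of_mem_head? hhead)]

instance indist_isTrans (i : P) : IsTrans _ (indist owner i) :=
  ⟨fun _ _ _ hst htu => ⟨hst.1.trans htu.1, hst.2.trans htu.2⟩⟩

theorem indist_of_reach_singleton {i : P} {s t : Set A × Set (Msg P A)}
    (h : reach owner {i} s t) : indist owner i s t := by
  simp only [reach, Set.mem_singleton_iff, exists_eq_left] at h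
  rwa [Relation.transGen_eq_self] at h

theorem knownFacts_subset_of_indist {i : P} {V V' : Set A} {M M' : Set (Msg P A)}
    (h : indist owner i (V, M) (V', M')) (hS' : FwState owner V' M') :
    knownFacts owner i V M ⊆ V' := by
  rintro p (hp | ⟨m, hm, rfl⟩)
  · exact (h.1 ▸ hp : p ∈ {q ∈ V' | owner q = i}).1
  · exact hS'.fact_mem_s13 (h.2 ▸ hm : m ∈ {m ∈ M' | i ∈ m.grp}).1

/-- An explanation of `m` only uses messages about `m.fact`. -/
theorem Explains.restrict {V W : Set A} {M : Set (Msg P A)} {m : Msg P A}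
    (h : Explains owner V M m) (hW : m.fact ∈ W) :
    Explains owner W {x ∈ M | x.fact ∈ W} m := by
  obtain ⟨L, hLM, hchain, hnd, hfacts, ⟨m₀, hhead, hown, -⟩, hlast⟩ := h
  refine ⟨L, fun x hx => ⟨hLM x hx, hfacts x hx ▸ hW⟩, hchain, hnd, hfacts,
    ⟨m₀, hhead, hown, ?_⟩, hlast⟩
  rwa [hfacts m₀ (List.mem_of_mem_head? hhead)]

theorem FwState.restrict {V : Set A} {M : Set (Msg P A)} (hS : FwState owner V M)
    (W : Set A) : FwState owner W {m ∈ M | m.fact ∈ W} :=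
  fun m ⟨hm, hW⟩ => ⟨(hS m hm).1, (hS m hm).2.restrict hW⟩

theorem indist_restrict_knownFacts {V : Set A} {M : Set (Msg P A)} (hS : FwState owner V M)
    (i : P) :
    indist owner i (V, M)
      (knownFacts owner i V M, {m ∈ M | m.fact ∈ knownFacts owner i V M}) := by
  constructor
  · ext q
    simp only [Set.mem_sep_iff, knownFacts, Set.mem_union]
    constructor
    · rintro ⟨hq, hqi⟩
      exact ⟨Or.inl ⟨hq, hqi⟩, hqi⟩
    · rintro ⟨hq | ⟨m, hm, rfl⟩, hqi⟩
      · exact hq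
      · exact ⟨hS.fact_mem_s13 hm.1, hqi⟩
  · ext m
    simp only [Set.mem_sep_iff]
    constructor
    · rintro ⟨hm, hi⟩
      exact ⟨⟨hm, Or.inr ⟨m, ⟨hm, hi⟩, rfl⟩⟩, hi⟩
    · rintro ⟨⟨hm, -⟩, hi⟩
      exact ⟨hm, hi⟩

theorem fw_knows_fact_iff_general {P A : Type} (owner : A → P)
    (H : Set (Set P)) (V : Set A) (M : Set (Msg P A))
    (hS : FwState owner V M) (hC : HComp H M)
    (i : P) (p : A) :
    sat owner H (.ck {i} (.atom p)) V M ↔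
      (p ∈ V ∧ owner p = i) ∨ ∃ m ∈ M, i ∈ m.grp ∧ m.fact = p := by
  rw [← mem_knownFacts]
  constructor
  · intro hK
    exact hK _ _ (hS.restrict _) (fun m hm => hC m hm.1)
      (.single ⟨i, rfl, indist_restrict_knownFacts hS i⟩)
  · intro hp V' M' hS' _ hreach
    exact knownFacts_subset_of_indist (indist_of_reach_singleton hreach) hS' hp

theorem fw_knows_fact_iff {P A : Type} [Fintype P] (owner : A → P)
    (H : Set (Set P)) (V : Set A) (M : Set (Msg P A))
    (hS : FwState owner V M) (hC : HComp H M)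
    (i : P) (p : A) :
    sat owner H (.ck {i} (.atom p)) V M ↔
      (p ∈ V ∧ owner p = i) ∨ ∃ m ∈ M, i ∈ m.grp ∧ m.fact = p :=
  fw_knows_fact_iff_general owner H V M hS hC i p
end
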